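/- Let G be a finite connected chordal graph, let x be a vertex of G, and let u, v be vertices with d_G(u,x) = d_G(v,x) = ℓ for some positive integer ℓ. Suppose d_G(u,v) = p for some even integer p ≥ 2, and let K_u (respectively K_v) be the set of ancestors of u (respectively v) in the level N^{ℓ−p/2}(x). Then either K_u and K_v are adjacent cliques of G, or K_u ∩ K_v ≠ ∅. -/

import Mathlib

open SimpleGraph

/-- A simple graph is *chordal* if every cycle of length at least 4 has a chord, i.e.
two vertices of the cycle that are adjacent in the graph but not consecutive on the cycle. -/
def SimpleGraph.IsChordal {V : Type*} (G : SimpleGraph V) : Prop :=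
  ∀ (v : V) (c : G.Walk v v), c.IsCycle → 4 ≤ c.length →
    ∃ x y, x ∈ c.support ∧ y ∈ c.support ∧ G.Adj x y ∧ ¬ c.toSubgraph.Adj x y

/-- The exact distance-`p` graph of `G`: same vertex set, with an edge between distinct
vertices `u` and `v` iff their graph distance is exactly `p`. -/
def SimpleGraph.exactDistGraph {V : Type*} (G : SimpleGraph V) (p : ℕ) : SimpleGraph V where
  Adj u v := u ≠ v ∧ G.edist u v = p
  symm := ⟨fun u v h => ⟨h.1.symm, by rw [SimpleGraph.edist_comm]; exact h.2⟩⟩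
  loopless := ⟨fun v h => h.1 rfl⟩

/-- `w` is an *ancestor* of `u` with respect to `x` if `w` lies on a strictly earlier
distance-level from `x` than `u` does, and there is a path from `u` to `w` whose length is
the difference of the two levels. -/
def SimpleGraph.IsAncestor {V : Type*} (G : SimpleGraph V) (x w u : V) : Prop :=
  G.dist x w < G.dist x u ∧
    ∃ q : G.Walk u w, q.IsPath ∧ q.length = G.dist x u - G.dist x w

/-!
Choose ancestors `a` of `u` and `b` of `v` on level `ℓ - p/2` at distance `p/2` from `u` and
`v`. If the two ancestor sets are disjoint, the walk `a → u → v → b` along geodesics stays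
strictly above that level except at its ends, since a vertex of the `u`–`v` geodesic on the
level would be a common ancestor. In a chordal graph two vertices of one level joined by such a
walk are adjacent. This is proved by induction on the level: shorten the walk to a chordless path
`P`, and close it up with a chordless path `R` from `b` back to `a` through the level below
(via a common parent, or via two distinct parents, which are adjacent by induction). The levels
keep `P` and `R` apart, so if `P` had length at least two, `P` followed by `R` would be a
chordless cycle of length at least four.
-/

namespace SimpleGraph

variable {V : Type*} {G : SimpleGraph V}

namespace Walk

variable {u v w : V}

lemma exists_length_lt_of_adj_getVert (p : G.Walk u v) {i j : ℕ} (hij : i + 1 < j)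
    (hj : j ≤ p.length) (hadj : G.Adj (p.getVert i) (p.getVert j)) :
    ∃ q : G.Walk u v, q.length < p.length ∧ q.support ⊆ p.support := by
  refine ⟨(p.take i).append (cons hadj (p.drop j)), by simp; omega, fun z hz => ?_⟩
  rw [mem_support_append_iff, support_cons, List.mem_cons] at hz
  rcases hz with hz | rfl | hz
  · exact (isSubwalk_take p i).support_subset hz
  · exact p.getVert_mem_support i
  · exact (isSubwalk_drop p j).support_subset hz

lemma IsChord.exists_length_lt {p : G.Walk u v} {e : Sym2 V} (h : p.IsChord e) :
    ∃ q : G.Walk u v, q.length < p.length ∧ q.support ⊆ p.support := by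
  induction e using Sym2.ind with | _ y z =>
  obtain ⟨hadj, hne, hy, hz⟩ := isChord_sym2Mk.mp h
  obtain ⟨i, rfl, hi⟩ := mem_support_iff_exists_getVert.mp hy
  obtain ⟨j, rfl, hj⟩ := mem_support_iff_exists_getVert.mp hz
  rcases Nat.lt_or_ge (i + 1) j with hij | hji
  · exact p.exists_length_lt_of_adj_getVert hij hj hadj
  rcases Nat.lt_or_ge (j + 1) i with hji' | hij'
  · exact p.exists_length_lt_of_adj_getVert hji' hi hadj.symm
  have hstep : ∀ k < p.length, s(p.getVert k, p.getVert (k + 1)) ∈ p.edges :=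
    fun k hk => (mk_mem_edges_iff_exists p).mpr ⟨k, hk, rfl⟩
  obtain rfl | rfl | rfl : j = i + 1 ∨ i = j + 1 ∨ i = j := by omega
  · exact absurd (hstep i (by omega)) hne
  · exact absurd (Sym2.eq_swap ▸ hstep j (by omega)) hne
  · exact absurd rfl hadj.ne

theorem exists_isPath_isChordless_support_subset [DecidableEq V] (w : G.Walk u v) :
    ∃ p : G.Walk u v, p.IsPath ∧ p.IsChordless ∧ p.support ⊆ w.support := by
  induction hn : w.length using Nat.strong_induction_on generalizing w with | _ n ih =>
  by_cases hc : w.bypass.IsChordless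
  · exact ⟨w.bypass, w.bypass_isPath, hc, w.support_bypass_subset_support⟩
  obtain ⟨e, he⟩ : ∃ e, w.bypass.IsChord e := by simpa [IsChordless] using hc
  obtain ⟨q, hq, hqw⟩ := he.exists_length_lt
  obtain ⟨p, hp, hpc, hpq⟩ := ih q.length (hn ▸ hq.trans_le w.length_bypass_le_length) q rfl
  exact ⟨p, hp, hpc, fun z hz => w.support_bypass_subset_support (hqw (hpq hz))⟩

theorem IsChordless.append {p : G.Walk u v} {q : G.Walk v w} (hp : p.IsChordless)
    (hq : q.IsChordless)
    (hpq : ∀ y ∈ p.support, ∀ z ∈ q.support, G.Adj y z → y ∈ q.support ∨ z ∈ p.support) :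
    (p.append q).IsChordless := by
  rw [isChordless_iff_forall_mem_edges] at hp hq ⊢
  have hcross : ∀ ⦃y z⦄, y ∈ p.support → z ∈ q.support → G.Adj y z →
      s(y, z) ∈ p.edges ∨ s(y, z) ∈ q.edges := fun y z hy hz hyz =>
    (hpq y hy z hz hyz).elim (fun hy' => .inr (hq hy' hz hyz)) (fun hz' => .inl (hp hy hz' hyz))
  intro y z hy hz hyz
  rw [edges_append, List.mem_append]
  rcases (mem_support_append_iff _ _).mp hy with hy | hy <;>
    rcases (mem_support_append_iff _ _).mp hz with hz | hz
  · exact .inl (hp hy hz hyz)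
  · exact hcross hy hz hyz
  · simpa only [Sym2.eq_swap] using hcross hz hy hyz.symm
  · exact .inr (hq hy hz hyz)

lemma IsPath.start_notMem_support_tail {p : G.Walk u v} (hp : p.IsPath) :
    u ∉ p.support.tail :=
  (List.nodup_cons.mp (p.cons_tail_support ▸ hp.support_nodup)).1

lemma dist_add_dist_le_length (p : G.Walk u v) (hw : w ∈ p.support) :
    G.dist u w + G.dist w v ≤ p.length := by
  obtain ⟨i, rfl, hi⟩ := mem_support_iff_exists_getVert.mp hw
  have h₁ := dist_le (p.take i)
  have h₂ := dist_le (p.drop i)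
  simp only [take_length, drop_length] at h₁ h₂
  omega

lemma eq_or_dist_lt_of_mem_support (hconn : G.Connected) {x a z : V} (q : G.Walk u a)
    (hq : G.dist x a + q.length ≤ G.dist x u) (hz : z ∈ q.support) :
    z = a ∨ G.dist x a < G.dist x z := by
  have h₁ := q.dist_add_dist_le_length hz
  have h₂ : G.dist x u ≤ G.dist x z + G.dist z u := hconn.dist_triangle
  rw [G.dist_comm (u := z)] at h₂
  by_cases hza : z = a
  · exact .inl hza
  · have := hconn.pos_dist_of_ne hza
    exact .inr (by omega)

end Walk

open Walk

theorem IsChordal.not_isChordless (hch : G.IsChordal) {v : V} {c : G.Walk v v}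
    (hc : c.IsCycle) (hlen : 4 ≤ c.length) : ¬ c.IsChordless := fun h => by
  obtain ⟨y, z, hy, hz, hyz, hnot⟩ := hch v c hc hlen
  exact hnot (adj_toSubgraph_iff_mem_edges.mpr (h.mem_edges hy hz hyz))

lemma exists_adj_dist_eq_of_dist_eq_add_one {x a : V} {r : ℕ} (h : G.dist x a = r + 1) :
    ∃ a', G.Adj a a' ∧ G.dist x a' = r := by
  obtain ⟨q, hq⟩ := exists_walk_of_dist_ne_zero (G := G) (u := a) (v := x)
    (by rw [G.dist_comm, h]; omega)
  rw [G.dist_comm, h] at hq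
  cases q with
  | nil => simp at hq
  | @cons _ a' _ hadj q =>
    have hle : G.dist a' x ≤ q.length := dist_le q
    rw [G.dist_comm] at hle
    simp only [length_cons, add_left_inj] at hq
    refine ⟨a', hadj, ?_⟩
    rcases hadj.diff_dist_adj (u := x) with h' | h' | h' <;> omega

lemma exists_isPath_isChordless_below {x a b : V} {r : ℕ} (ha : G.dist x a = r + 1)
    (hb : G.dist x b = r + 1) (hab : a ≠ b) (hnadj : ¬ G.Adj a b)
    (hparents : ∀ a' b', G.Adj a a' → G.Adj b b' → G.dist x a' = r → G.dist x b' = r →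
      a' ≠ b' → G.Adj a' b') :
    ∃ R : G.Walk b a, R.IsPath ∧ R.IsChordless ∧ 2 ≤ R.length ∧
      ∀ z ∈ R.support, z = a ∨ z = b ∨ G.dist x z ≤ r := by
  by_cases hcommon : ∃ c, G.Adj a c ∧ G.Adj b c ∧ G.dist x c = r
  · obtain ⟨c, hac, hbc, hc⟩ := hcommon
    refine ⟨cons hbc (cons hac.symm nil), ?_, ?_, by simp, ?_⟩
    · simp only [isPath_def, support_cons, support_nil]
      grind
    · rw [isChordless_iff_forall_mem_edges]
      simp only [support_cons, support_nil, edges_cons, edges_nil, List.mem_cons,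
        List.not_mem_nil, or_false]
      rintro y z (rfl | rfl | rfl) (rfl | rfl | rfl) h <;> simp_all [adj_comm, Sym2.eq_swap]
    · simp only [support_cons, support_nil]
      grind
  push Not at hcommon
  obtain ⟨a', haa', ha'⟩ := exists_adj_dist_eq_of_dist_eq_add_one ha
  obtain ⟨b', hbb', hb'⟩ := exists_adj_dist_eq_of_dist_eq_add_one hb
  have hne : a' ≠ b' := fun h => hcommon a' haa' (h ▸ hbb') ha'
  have hba' : ¬ G.Adj b a' := fun h => hcommon a' haa' h ha'
  have hab' : ¬ G.Adj a b' := fun h => hcommon b' h hbb' hb'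
  refine ⟨cons hbb' (cons (hparents a' b' haa' hbb' ha' hb' hne).symm (cons haa'.symm nil)),
    ?_, ?_, by simp, ?_⟩
  · simp only [isPath_def, support_cons, support_nil]
    grind
  · rw [isChordless_iff_forall_mem_edges]
    simp only [support_cons, support_nil, edges_cons, edges_nil, List.mem_cons,
      List.not_mem_nil, or_false]
    rintro y z (rfl | rfl | rfl | rfl) (rfl | rfl | rfl | rfl) h <;>
      simp_all [adj_comm, Sym2.eq_swap]
  · simp only [support_cons, support_nil]
    grind

theorem IsChordal.length_le_one_of_isChordless (hch : G.IsChordal) {x a b : V} {r : ℕ}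
    {P : G.Walk a b} {R : G.Walk b a} (hP : P.IsPath) (hR : R.IsPath) (hPc : P.IsChordless)
    (hRc : R.IsChordless) (hR2 : 2 ≤ R.length)
    (hPabove : ∀ z ∈ P.support, z = a ∨ z = b ∨ r < G.dist x z)
    (hRbelow : ∀ z ∈ R.support, z = a ∨ z = b ∨ G.dist x z < r) :
    P.length ≤ 1 := by
  by_contra! hP2
  have hdisj : P.support.tail.Disjoint R.support.tail := by
    intro z hzP hzR
    rcases hPabove z (List.mem_of_mem_tail hzP) with rfl | rfl | hzP'
    · exact hP.start_notMem_support_tail hzP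
    · exact hR.start_notMem_support_tail hzR
    rcases hRbelow z (List.mem_of_mem_tail hzR) with rfl | rfl | hzR'
    · exact hP.start_notMem_support_tail hzP
    · exact hR.start_notMem_support_tail hzR
    · omega
  have hcross : ∀ y ∈ P.support, ∀ z ∈ R.support, G.Adj y z →
      y ∈ R.support ∨ z ∈ P.support := by
    intro y hy z hz hyz
    rcases hPabove y hy with rfl | rfl | hy'
    · exact .inl R.end_mem_support
    · exact .inl R.start_mem_support
    rcases hRbelow z hz with rfl | rfl | hz'
    · exact .inr P.start_mem_support
    · exact .inr P.end_mem_support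
    rcases hyz.diff_dist_adj (u := x) with h | h | h <;> omega
  refine hch.not_isChordless (hP.isCycle_append hR hdisj (.inl hP2)) ?_ (hPc.append hRc hcross)
  rw [length_append]
  omega

theorem IsChordal.adj_of_walk_above (hch : G.IsChordal) (hconn : G.Connected) {x : V}
    {r : ℕ} {a b : V} (w : G.Walk a b) (hab : a ≠ b) (ha : G.dist x a = r)
    (hb : G.dist x b = r) (hw : ∀ z ∈ w.support, z = a ∨ z = b ∨ r < G.dist x z) :
    G.Adj a b := by
  classical
  induction r generalizing a b with
  | zero =>
    exact absurd ((hconn.dist_eq_zero_iff.mp ha).symm.trans (hconn.dist_eq_zero_iff.mp hb)) hab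
  | succ r ih =>
  by_contra hnadj
  obtain ⟨P, hP, hPc, hPw⟩ := w.exists_isPath_isChordless_support_subset
  obtain ⟨R, hR, hRc, hR2, hRbelow⟩ := exists_isPath_isChordless_below ha hb hab hnadj
    fun a' b' haa' hbb' ha' hb' hne => ih (cons haa'.symm (w.concat hbb')) hne ha' hb' (by
      intro z hz
      simp only [support_cons, support_concat, List.mem_cons,
        List.mem_append, List.not_mem_nil, or_false] at hz
      rcases hz with rfl | hz | rfl
      · exact .inl rfl
      · rcases hw z hz with rfl | rfl | hz <;> omega
      · exact .inr (.inl rfl))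
  have hP1 : P.length ≤ 1 := hch.length_le_one_of_isChordless hP hR hPc hRc hR2
    (fun z hz => hw z (hPw hz))
    (fun z hz => (hRbelow z hz).imp_right (.imp_right Nat.lt_succ_of_le))
  have hP0 : P.length ≠ 0 := fun h => hab (eq_of_length_eq_zero h)
  exact hnadj (adj_of_length_eq_one (p := P) (by omega))

lemma Connected.exists_dist_eq_of_le (hconn : G.Connected) {u x : V} {k : ℕ}
    (hk : k ≤ G.dist u x) : ∃ z, G.dist u z = k ∧ G.dist z x = G.dist u x - k := by
  obtain ⟨q, hq⟩ := hconn.exists_walk_length_eq_dist u x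
  have h₁ := dist_le (q.take k)
  have h₂ := dist_le (q.drop k)
  have h₃ : G.dist u x ≤ G.dist u (q.getVert k) + G.dist (q.getVert k) x := hconn.dist_triangle
  simp only [take_length, drop_length] at h₁ h₂
  exact ⟨q.getVert k, by omega, by omega⟩

lemma isAncestor_of_dist_add_dist_eq (hconn : G.Connected) {x w u : V} (hwu : w ≠ u)
    (h : G.dist x w + G.dist u w = G.dist x u) : G.IsAncestor x w u := by
  have := hconn.pos_dist_of_ne hwu.symm
  obtain ⟨q, hq, hlen⟩ := hconn.exists_path_of_dist u w
  exact ⟨by omega, q, hq, by omega⟩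

lemma exists_walk_above_or_midpoint (hconn : G.Connected) {x u v a b : V} {ℓ k : ℕ}
    (hxu : G.dist x u = ℓ) (hxv : G.dist x v = ℓ) (huv : G.dist u v = k + k)
    (hua : G.dist u a = k) (hxa : G.dist x a + k = ℓ)
    (hvb : G.dist v b = k) (hxb : G.dist x b + k = ℓ) :
    ∃ w : G.Walk a b, ∀ z ∈ w.support, z = a ∨ z = b ∨ ℓ - k < G.dist x z ∨
      (G.dist x z + k = ℓ ∧ G.dist u z = k ∧ G.dist v z = k) := by
  obtain ⟨Pa, hPa⟩ := hconn.exists_walk_length_eq_dist u a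
  obtain ⟨W, hW⟩ := hconn.exists_walk_length_eq_dist u v
  obtain ⟨Pb, hPb⟩ := hconn.exists_walk_length_eq_dist v b
  refine ⟨Pa.reverse.append (W.append Pb), fun z hz => ?_⟩
  simp only [mem_support_append_iff, support_reverse, List.mem_reverse] at hz
  rcases hz with hz | hz | hz
  · rcases Pa.eq_or_dist_lt_of_mem_support hconn (x := x) (by omega) hz with h | h
    · exact .inl h
    · exact .inr (.inr (.inl (by omega)))
  · have := W.dist_add_dist_le_length hz
    have : G.dist x u ≤ G.dist x z + G.dist z u := hconn.dist_triangle
    have : G.dist x v ≤ G.dist x z + G.dist z v := hconn.dist_triangle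
    rw [G.dist_comm (u := z)] at *
    omega
  · rcases Pb.eq_or_dist_lt_of_mem_support hconn (x := x) (by omega) hz with h | h
    · exact .inr (.inl h)
    · exact .inr (.inr (.inl (by omega)))

end SimpleGraph

theorem ancestor_cliques_adjacent_or_meet_of_even_general {V : Type*} (G : SimpleGraph V)
    (hch : G.IsChordal) (hconn : G.Connected) (x u v : V) (ℓ p : ℕ)
    (hu : G.dist u x = ℓ) (hv : G.dist v x = ℓ)
    (heven : Even p) (hp : 2 ≤ p) (huv : G.dist u v = p)
    (Ku Kv : Set V)
    (hKu : Ku = {w : V | G.dist x w = ℓ - p / 2 ∧ G.IsAncestor x w u})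
    (hKv : Kv = {w : V | G.dist x w = ℓ - p / 2 ∧ G.IsAncestor x w v}) :
    (Disjoint Ku Kv ∧ ∃ a ∈ Ku, ∃ b ∈ Kv, G.Adj a b) ∨ (Ku ∩ Kv).Nonempty := by
  obtain ⟨k, rfl⟩ := heven
  rw [show (k + k) / 2 = k by omega] at hKu hKv
  subst hKu hKv
  have hxu : G.dist x u = ℓ := G.dist_comm.trans hu
  have hxv : G.dist x v = ℓ := G.dist_comm.trans hv
  have hkℓ : k ≤ ℓ := by
    have : G.dist u v ≤ G.dist u x + G.dist x v := hconn.dist_triangle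
    omega
  have mem : ∀ {y w}, G.dist x y = ℓ → G.dist y w = k → G.dist x w + k = ℓ →
      G.dist x w = ℓ - k ∧ G.IsAncestor x w y := fun hy hyw hw =>
    ⟨by omega, isAncestor_of_dist_add_dist_eq hconn (by rintro rfl; simp at hyw; omega)
      (by omega)⟩
  by_cases hmeet : ({w | G.dist x w = ℓ - k ∧ G.IsAncestor x w u} ∩
      {w | G.dist x w = ℓ - k ∧ G.IsAncestor x w v}).Nonempty
  · exact .inr hmeet
  refine .inl ⟨Set.disjoint_iff_inter_eq_empty.mpr (Set.not_nonempty_iff_eq_empty.mp hmeet), ?_⟩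
  obtain ⟨a, hua, hax⟩ := hconn.exists_dist_eq_of_le (u := u) (x := x) (k := k) (by omega)
  obtain ⟨b, hvb, hbx⟩ := hconn.exists_dist_eq_of_le (u := v) (x := x) (k := k) (by omega)
  rw [G.dist_comm] at hax hbx
  have ha := mem hxu hua (by omega)
  have hb := mem hxv hvb (by omega)
  obtain ⟨w, hw⟩ := exists_walk_above_or_midpoint hconn hxu hxv huv hua (by omega) hvb (by omega)
  refine ⟨a, ha, b, hb, hch.adj_of_walk_above hconn w (fun h => hmeet ⟨a, ha, h ▸ hb⟩)
    ha.1 hb.1 fun z hz => ?_⟩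
  rcases hw z hz with h | h | h | ⟨hxz, huz, hvz⟩
  · exact .inl h
  · exact .inr (.inl h)
  · exact .inr (.inr h)
  · exact absurd ⟨z, mem hxu huz hxz, mem hxv hvz hxz⟩ hmeet

/-- In a finite connected chordal graph `G`, let `u, v` lie on level
`ℓ ≥ 1` with respect to `x` with `d_G(u,v) = p` for an even `p ≥ 2`, and let `K_u, K_v` be
the sets of ancestors of `u, v` on level `ℓ - p/2`. Then either `K_u` and `K_v` are adjacent
cliques (disjoint, with some vertex of `K_u` adjacent to some vertex of `K_v`), or
`K_u ∩ K_v ≠ ∅`. -/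
theorem ancestor_cliques_adjacent_or_meet_of_even {V : Type*} [Fintype V] (G : SimpleGraph V)
    (hch : G.IsChordal) (hconn : G.Connected) (x u v : V) (ℓ p : ℕ) (hℓ : 1 ≤ ℓ)
    (hu : G.dist u x = ℓ) (hv : G.dist v x = ℓ)
    (heven : Even p) (hp : 2 ≤ p) (huv : G.dist u v = p)
    (Ku Kv : Set V)
    (hKu : Ku = {w : V | G.dist x w = ℓ - p / 2 ∧ G.IsAncestor x w u})
    (hKv : Kv = {w : V | G.dist x w = ℓ - p / 2 ∧ G.IsAncestor x w v}) :
    (Disjoint Ku Kv ∧ ∃ a ∈ Ku, ∃ b ∈ Kv, G.Adj a b) ∨ (Ku ∩ Kv).Nonempty :=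
  ancestor_cliques_adjacent_or_meet_of_even_general G hch hconn x u v ℓ p hu hv heven hp huv Ku Kv
    hKu hKv
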